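/- Let φ be a real-valued C¹ function on [-1,1]. Then lim_{μ→0⁺} ∫_{-1}^{1} φ(σ)/(σ - iμ) dσ = iπ φ(0) + ∫_{-1}^{1} (∫_0^1 φ'(σθ) dθ) dσ. -/

import Mathlib

/-!
Hadamard's lemma writes `φ σ = φ 0 + σ * ψ σ` with `ψ σ = ∫₀¹ φ'(σθ) dθ` continuous, which splits
the integral in two. The first part is `φ 0 * ∫ (σ - iμ)⁻¹ = φ 0 * (log (1 - iμ) - log (-1 - iμ))`,
and as `μ → 0⁺` the point `-1 - iμ` approaches the branch cut of `log` from below, so the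
bracket tends to `0 - (-iπ) = iπ`. The second part `∫ σ ψ σ / (σ - iμ)` tends to `∫ ψ` by
dominated convergence, since `|σ| ≤ |σ - iμ|`.
-/

open MeasureTheory Real Filter Set Complex Topology

section Hadamard

variable {E : Type*} [NormedAddCommGroup E] [NormedSpace ℝ E] {φ : ℝ → E} {a b : ℝ}

theorem integral_derivWithin_Icc_eq_sub [CompleteSpace E] {x y : ℝ}
    (hφ : ContDiffOn ℝ 1 φ (Icc a b)) (hx : x ∈ Icc a b) (hy : y ∈ Icc a b) :
    ∫ t in x..y, derivWithin φ (Icc a b) t = φ y - φ x := by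
  have hsub : uIcc x y ⊆ Icc a b := uIcc_subset_Icc hx hy
  rw [← intervalIntegral.integral_derivWithin_uIcc_of_contDiffOn_uIcc (hφ.mono hsub)]
  refine intervalIntegral.integral_congr_ae ?_
  filter_upwards [volume.ae_ne (max x y)] with t hne ht
  have ht' : t ∈ Ioo (min x y) (max x y) := ⟨ht.1, lt_of_le_of_ne ht.2 hne⟩
  have hnhds : uIcc x y ∈ 𝓝 t := Icc_mem_nhds ht'.1 ht'.2
  rw [derivWithin_of_mem_nhds (mem_of_superset hnhds hsub), derivWithin_of_mem_nhds hnhds]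

theorem eq_add_smul_integral_derivWithin_comp_mul [CompleteSpace E] {σ : ℝ}
    (hφ : ContDiffOn ℝ 1 φ (Icc a b)) (h0 : (0 : ℝ) ∈ Icc a b) (hσ : σ ∈ Icc a b) :
    φ σ = φ 0 + σ • ∫ θ in (0 : ℝ)..1, derivWithin φ (Icc a b) (σ * θ) := by
  rw [intervalIntegral.smul_integral_comp_mul_left, mul_zero, mul_one,
    integral_derivWithin_Icc_eq_sub hφ h0 hσ, add_sub_cancel]

theorem continuousOn_integral_derivWithin_comp_mul (hφ : ContDiffOn ℝ 1 φ (Icc a b))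
    (hab : a < b) (h0 : (0 : ℝ) ∈ Icc a b) :
    ContinuousOn (fun σ ↦ ∫ θ in (0 : ℝ)..1, derivWithin φ (Icc a b) (σ * θ)) (Icc a b) := by
  set φ' := derivWithin φ (Icc a b)
  have hφ' : ContinuousOn φ' (Icc a b) :=
    hφ.continuousOn_derivWithin (uniqueDiffOn_Icc hab) le_rfl
  -- `φ'` is clamped to `[a, b]` so that the parametric integral is continuous on all of `ℝ`
  set Φ : ℝ → E := fun t ↦ φ' (projIcc a b hab.le t)
  have hΦ : Continuous Φ :=
    hφ'.comp_continuous (continuous_subtype_val.comp continuous_projIcc) fun t ↦ Subtype.prop _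
  refine (intervalIntegral.continuous_parametric_intervalIntegral_of_continuous'
    (f := fun σ θ ↦ Φ (σ * θ)) (μ := volume) (by fun_prop) 0 1).continuousOn.congr fun σ hσ ↦ ?_
  refine intervalIntegral.integral_congr fun θ hθ ↦ ?_
  rw [uIcc_of_le zero_le_one] at hθ
  have hσθ : σ * θ ∈ Icc a b := by
    simpa [mul_comm] using (convex_Icc a b).smul_mem_of_zero_mem h0 hσ hθ
  simp [Φ, projIcc_of_mem _ hσθ]

end Hadamard

section Plemelj

variable {a b μ : ℝ}

theorem tendsto_ofReal_sub_mul_I (x : ℝ) :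
    Tendsto (fun μ : ℝ ↦ (x : ℂ) - μ * I) (𝓝 0) (𝓝 x) := by
  simpa using ((by fun_prop : Continuous fun μ : ℝ ↦ (x : ℂ) - μ * I).tendsto 0)

theorem ofReal_sub_mul_I_mem_slitPlane (σ : ℝ) (hμ : μ ≠ 0) :
    (σ : ℂ) - μ * I ∈ slitPlane := by
  simp [mem_slitPlane_iff, hμ]

theorem ofReal_sub_mul_I_ne_zero (σ : ℝ) (hμ : μ ≠ 0) : (σ : ℂ) - μ * I ≠ 0 :=
  slitPlane_ne_zero (ofReal_sub_mul_I_mem_slitPlane σ hμ)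

theorem integral_inv_ofReal_sub_mul_I (hμ : μ ≠ 0) :
    ∫ σ in a..b, ((σ : ℂ) - μ * I)⁻¹ = log (b - μ * I) - log (a - μ * I) := by
  refine intervalIntegral.integral_eq_sub_of_hasDerivAt
    (f := fun σ : ℝ ↦ log ((σ : ℂ) - μ * I)) (fun σ _ ↦ ?_)
    (Continuous.intervalIntegrable ?_ a b)
  · simpa using ((hasDerivAt_log (ofReal_sub_mul_I_mem_slitPlane σ hμ)).comp (σ : ℂ)
      ((hasDerivAt_id (σ : ℂ)).sub_const _)).comp_ofReal
  · exact (continuous_ofReal.sub continuous_const).inv₀ (ofReal_sub_mul_I_ne_zero · hμ)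

theorem tendsto_log_ofReal_sub_mul_I_of_pos (hb : 0 < b) :
    Tendsto (fun μ : ℝ ↦ log (b - μ * I)) (𝓝 0) (𝓝 (Real.log b)) := by
  rw [ofReal_log hb.le]
  exact (continuousAt_clog (ofReal_mem_slitPlane.2 hb)).tendsto.comp (tendsto_ofReal_sub_mul_I b)

theorem tendsto_log_ofReal_sub_mul_I_of_neg (ha : a < 0) :
    Tendsto (fun μ : ℝ ↦ log (a - μ * I)) (𝓝[>] 0) (𝓝 (Real.log (-a) - π * I)) := by
  have hlog := tendsto_log_nhdsWithin_im_neg_of_re_neg_of_im_zero (z := a) (by simpa) (by simp)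
  rw [norm_real, norm_eq_abs, abs_of_neg ha] at hlog
  refine hlog.comp (tendsto_nhdsWithin_iff.2 ⟨?_, ?_⟩)
  · exact (tendsto_ofReal_sub_mul_I a).mono_left nhdsWithin_le_nhds
  · filter_upwards [self_mem_nhdsWithin] with μ hμ
    simpa using hμ

theorem tendsto_integral_inv_ofReal_sub_mul_I (ha : a < 0) (hb : 0 < b) :
    Tendsto (fun μ : ℝ ↦ ∫ σ in a..b, ((σ : ℂ) - μ * I)⁻¹) (𝓝[>] 0)
      (𝓝 (Real.log b - Real.log (-a) + π * I)) := by
  have hlim := ((tendsto_log_ofReal_sub_mul_I_of_pos hb).mono_left nhdsWithin_le_nhds).sub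
    (tendsto_log_ofReal_sub_mul_I_of_neg ha)
  rw [show (Real.log b : ℂ) - (Real.log (-a) - π * I) = Real.log b - Real.log (-a) + π * I by ring]
    at hlim
  refine hlim.congr' ?_
  filter_upwards [self_mem_nhdsWithin] with μ hμ
  rw [integral_inv_ofReal_sub_mul_I (ne_of_gt hμ)]

theorem norm_ofReal_le_norm_ofReal_sub_mul_I (σ μ : ℝ) : ‖(σ : ℂ)‖ ≤ ‖(σ : ℂ) - μ * I‖ := by
  simpa using abs_re_le_norm ((σ : ℂ) - μ * I)

theorem tendsto_integral_mul_div_ofReal_sub_mul_I {ψ : ℝ → ℂ}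
    (hψ : IntervalIntegrable ψ volume a b) :
    Tendsto (fun μ : ℝ ↦ ∫ σ in a..b, σ * ψ σ / (σ - μ * I)) (𝓝 0) (𝓝 (∫ σ in a..b, ψ σ)) := by
  refine intervalIntegral.tendsto_integral_filter_of_dominated_convergence (fun σ ↦ ‖ψ σ‖)
    (Eventually.of_forall fun μ ↦ ?_) (Eventually.of_forall fun μ ↦ ?_) hψ.norm ?_
  · have hquot : Measurable fun σ : ℝ ↦ (σ : ℂ) / (σ - μ * I) := by fun_prop
    exact (hquot.aestronglyMeasurable.mul hψ.def'.aestronglyMeasurable).congr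
      (ae_of_all _ fun σ ↦ div_mul_eq_mul_div _ _ _)
  · refine Eventually.of_forall fun σ _ ↦ ?_
    rw [norm_div, norm_mul]
    exact div_le_of_le_mul₀ (norm_nonneg _) (norm_nonneg _)
      (by rw [mul_comm]; gcongr; exact norm_ofReal_le_norm_ofReal_sub_mul_I σ μ)
  · filter_upwards [volume.ae_ne 0] with σ hσ _
    have hσ' : (σ : ℂ) ≠ 0 := ofReal_ne_zero.2 hσ
    have hlim := (tendsto_const_nhds (x := (σ : ℂ) * ψ σ)).div (tendsto_ofReal_sub_mul_I σ) hσ'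
    rwa [mul_div_cancel_left₀ _ hσ'] at hlim

theorem integral_div_ofReal_sub_mul_I_eq {f ψ : ℝ → ℂ} (hμ : μ ≠ 0)
    (hψ : IntervalIntegrable ψ volume a b) (hf : ∀ σ ∈ uIcc a b, f σ = f 0 + σ * ψ σ) :
    ∫ σ in a..b, f σ / (σ - μ * I) =
      f 0 * (∫ σ in a..b, ((σ : ℂ) - μ * I)⁻¹) + ∫ σ in a..b, σ * ψ σ / (σ - μ * I) := by
  have hinv : ContinuousOn (fun σ : ℝ ↦ ((σ : ℂ) - μ * I)⁻¹) (uIcc a b) :=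
    ((continuous_ofReal.sub continuous_const).inv₀ (ofReal_sub_mul_I_ne_zero · hμ)).continuousOn
  have hquot : ContinuousOn (fun σ : ℝ ↦ (σ : ℂ) / (σ - μ * I)) (uIcc a b) :=
    ((continuous_ofReal.div (continuous_ofReal.sub continuous_const)
      (ofReal_sub_mul_I_ne_zero · hμ))).continuousOn
  have hint : IntervalIntegrable (fun σ : ℝ ↦ σ * ψ σ / (σ - μ * I)) volume a b := by
    simpa only [div_mul_eq_mul_div] using hψ.continuousOn_mul hquot
  rw [← intervalIntegral.integral_const_mul,
    ← intervalIntegral.integral_add (hinv.intervalIntegrable.const_mul _) hint]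
  refine intervalIntegral.integral_congr fun σ hσ ↦ ?_
  simp only [hf σ hσ]
  ring

theorem tendsto_integral_div_ofReal_sub_mul_I {f ψ : ℝ → ℂ} (ha : a < 0) (hb : 0 < b)
    (hψ : IntervalIntegrable ψ volume a b) (hf : ∀ σ ∈ uIcc a b, f σ = f 0 + σ * ψ σ) :
    Tendsto (fun μ : ℝ ↦ ∫ σ in a..b, f σ / (σ - μ * I)) (𝓝[>] 0)
      (𝓝 (f 0 * (Real.log b - Real.log (-a) + π * I) + ∫ σ in a..b, ψ σ)) := by
  refine (((tendsto_integral_inv_ofReal_sub_mul_I ha hb).const_mul (f 0)).add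
    ((tendsto_integral_mul_div_ofReal_sub_mul_I hψ).mono_left nhdsWithin_le_nhds)).congr' ?_
  filter_upwards [self_mem_nhdsWithin] with μ hμ
  rw [integral_div_ofReal_sub_mul_I_eq (ne_of_gt hμ) hψ hf]

end Plemelj

theorem limit_principal_value
    (φ : ℝ → ℝ) (hφ : ContDiffOn ℝ 1 φ (Icc (-1) 1)) :
    Tendsto
      (fun μ : ℝ => ∫ σ in (-1:ℝ)..1, (φ σ : ℂ) / ((σ : ℂ) - μ * Complex.I))
      (nhdsWithin 0 (Ioi 0))
      (nhds ((Real.pi : ℂ) * Complex.I * (φ 0 : ℂ) +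
        ((∫ σ in (-1:ℝ)..1, ∫ θ in (0:ℝ)..1,
          derivWithin φ (Icc (-1) 1) (σ * θ) : ℝ) : ℂ))) := by
  set ψ : ℝ → ℝ := fun σ ↦ ∫ θ in (0:ℝ)..1, derivWithin φ (Icc (-1) 1) (σ * θ)
  have h0 : (0 : ℝ) ∈ Icc (-1) 1 := by norm_num
  have hψ : ContinuousOn ψ (uIcc (-1) 1) := by
    rw [uIcc_of_le (by norm_num)]
    exact continuousOn_integral_derivWithin_comp_mul hφ (by norm_num) h0
  have hφψ : ∀ σ ∈ uIcc (-1 : ℝ) 1, (φ σ : ℂ) = φ 0 + σ * ψ σ := by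
    intro σ hσ
    rw [uIcc_of_le (by norm_num)] at hσ
    rw [eq_add_smul_integral_derivWithin_comp_mul hφ h0 hσ, smul_eq_mul]
    push_cast
    rfl
  convert tendsto_integral_div_ofReal_sub_mul_I (by norm_num) (by norm_num)
    (continuous_ofReal.comp_continuousOn hψ).intervalIntegrable hφψ using 2
  rw [Function.comp_def, intervalIntegral.integral_ofReal]
  norm_num
  ring
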